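/- For n ≥ 2, the trace normalized distance between SDD_n^* and the PSD cone equals (n−2)/n: sup{‖X − P_{S^n_+}(X)‖_F : X ∈ SDD_n^*, Tr(X) = 1} = (n−2)/n. -/

import Mathlib

open Matrix BigOperators

/-- Frobenius norm of a real matrix. -/
noncomputable def frob {n : ℕ} (M : Matrix (Fin n) (Fin n) ℝ) : ℝ :=
  Real.sqrt (∑ i, ∑ j, (M i j) ^ 2)

/-- Frobenius distance from `X` to the PSD cone. -/
noncomputable def distPSD {n : ℕ} (X : Matrix (Fin n) (Fin n) ℝ) : ℝ :=
  sInf {d : ℝ | ∃ Y : Matrix (Fin n) (Fin n) ℝ, Y.PosSemidef ∧ d = frob (X - Y)}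

/-- Membership in `SDD_n^*`. -/
def SDDstar {n : ℕ} (X : Matrix (Fin n) (Fin n) ℝ) : Prop :=
  X.IsSymm ∧ (∀ i, 0 ≤ X i i) ∧ ∀ i j : Fin n, i < j → X i j ^ 2 ≤ X i i * X j j

/-- Membership in `DD_n^*`. -/
def DDstar {n : ℕ} (X : Matrix (Fin n) (Fin n) ℝ) : Prop :=
  X.IsSymm ∧ ∀ i j : Fin n, i ≤ j →
    0 ≤ X i i + X j j + 2 * X i j ∧ 0 ≤ X i i + X j j - 2 * X i j

/-- Membership in the k-PSD closure `S^{n,k}`. -/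
def kPSD {n : ℕ} (k : ℕ) (X : Matrix (Fin n) (Fin n) ℝ) : Prop :=
  X.IsSymm ∧ ∀ f : Fin k → Fin n, Function.Injective f → (X.submatrix f f).PosSemidef

/-- The matrix `G(a,b,n) = (a+b)I - a ee^T`. -/
noncomputable def gmat (n : ℕ) (a b : ℝ) : Matrix (Fin n) (Fin n) ℝ :=
  (a + b) • (1 : Matrix (Fin n) (Fin n) ℝ) - a • Matrix.of (fun _ _ => (1 : ℝ))

open Finset

section Aux

lemma scalar_lemma (n : ℕ) (hn : 2 ≤ n) (lam : Fin n → ℝ)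
    (h1 : ∑ i, lam i = 1) (h2 : ∑ i, (lam i)^2 ≤ 1) :
    ∑ i, (min (lam i) 0)^2 ≤ (((n:ℝ) - 2)/n)^2 := by
  have hn2 : (2:ℝ) ≤ n := by exact_mod_cast hn
  have hn0 : (0:ℝ) < n := by positivity
  have hr0 : (0:ℝ) ≤ ((n:ℝ) - 2)/n := div_nonneg (by linarith) hn0.le
  set a : ℝ := ∑ i, (-(min (lam i) 0)) with ha
  have hnonneg : ∀ i ∈ (univ : Finset (Fin n)), 0 ≤ -(min (lam i) 0) := by
    intro i _
    have : min (lam i) 0 ≤ 0 := min_le_right _ _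
    linarith
  have ha0 : 0 ≤ a := Finset.sum_nonneg hnonneg
  have hNa : ∑ i, (min (lam i) 0)^2 ≤ a^2 := by
    have h := Finset.sum_sq_le_sq_sum_of_nonneg (s := univ)
      (f := fun i => -(min (lam i) 0)) hnonneg
    calc ∑ i, (min (lam i) 0)^2 = ∑ i, (-(min (lam i) 0))^2 := by
          apply Finset.sum_congr rfl; intro i _; ring
      _ ≤ (∑ i, (-(min (lam i) 0)))^2 := h
      _ = a^2 := by rw [ha]
  rcases le_or_gt a (((n:ℝ) - 2)/n) with hcase | hcase
  · exact hNa.trans (by nlinarith)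
  · have hapos : 0 < a := lt_of_le_of_lt hr0 hcase
    obtain ⟨j, -, hj⟩ : ∃ j ∈ (univ : Finset (Fin n)), 0 < -(min (lam j) 0) := by
      by_contra h
      push_neg at h
      have : a ≤ 0 := Finset.sum_nonpos (fun i hi => (h i hi))
      linarith
    have hlamj : lam j < 0 := by
      rcases lt_or_ge (lam j) 0 with h | h
      · exact h
      · simp [min_eq_right h] at hj
    have hpj : max (lam j) 0 = 0 := max_eq_right hlamj.le
    have hsum_p : ∑ i, max (lam i) 0 = 1 + a := by
      have key : ∀ i, max (lam i) 0 = lam i + (-(min (lam i) 0)) := by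
        intro i; rcases le_or_gt (lam i) 0 with h | h
        · simp [max_eq_right h, min_eq_left h]
        · simp [max_eq_left h.le, min_eq_right h.le]
      rw [ha, Finset.sum_congr rfl (fun i _ => key i), Finset.sum_add_distrib, h1]
    have hcard : ((univ.erase j).card : ℝ) = (n:ℝ) - 1 := by
      rw [Finset.card_erase_of_mem (mem_univ j)]
      have h1n : (1:ℕ) ≤ n := by omega
      simp [Nat.cast_sub h1n]
    have hcs : (1 + a)^2 ≤ ((n:ℝ) - 1) * ∑ i, (max (lam i) 0)^2 := by
      have h := sq_sum_le_card_mul_sum_sq (s := univ.erase j) (f := fun i => max (lam i) 0)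
      have hsum_erase : ∑ i ∈ univ.erase j, max (lam i) 0 = 1 + a := by
        rw [Finset.sum_erase_eq_sub (mem_univ j), hpj, hsum_p, sub_zero]
      have hsq_erase : ∑ i ∈ univ.erase j, (max (lam i) 0)^2 ≤ ∑ i, (max (lam i) 0)^2 :=
        Finset.sum_le_sum_of_subset_of_nonneg (Finset.erase_subset _ _)
          (fun i _ _ => sq_nonneg _)
      rw [hsum_erase, hcard] at h
      calc (1+a)^2 ≤ ((n:ℝ)-1) * ∑ i ∈ univ.erase j, (max (lam i) 0)^2 := h
        _ ≤ ((n:ℝ)-1) * ∑ i, (max (lam i) 0)^2 := by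
            apply mul_le_mul_of_nonneg_left hsq_erase; linarith
    have hsplit : ∑ i, (max (lam i) 0)^2 = ∑ i, (lam i)^2 - ∑ i, (min (lam i) 0)^2 := by
      rw [eq_sub_iff_add_eq, ← Finset.sum_add_distrib]
      apply Finset.sum_congr rfl
      intro i _
      rcases le_or_gt (lam i) 0 with h | h
      · simp [max_eq_right h, min_eq_left h]
      · simp [max_eq_left h.le, min_eq_right h.le]
    have hN1 : ((n:ℝ)-1) * (∑ i, (min (lam i) 0)^2) ≤ ((n:ℝ)-1) - (1+a)^2 := by
      nlinarith [hcs, hsplit, h2]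
    have hna : (n:ℝ) * a > (n:ℝ) - 2 := by
      rw [gt_iff_lt, ← div_lt_iff₀' hn0]
      exact hcase
    rw [div_pow, le_div_iff₀ (by positivity)]
    nlinarith [hN1, hna, sq_nonneg ((n:ℝ)*a - ((n:ℝ)-2)),
      Finset.sum_nonneg (fun i (_ : i ∈ (univ : Finset (Fin n))) => sq_nonneg (min (lam i) 0))]

lemma frob_sq_trace {n : ℕ} (M : Matrix (Fin n) (Fin n) ℝ) :
    ∑ i, ∑ j, (M i j)^2 = (M * Mᵀ).trace := by
  simp [Matrix.trace, Matrix.mul_apply, Matrix.diag, sq]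

lemma conj_trace {n : ℕ} (U : Matrix (Fin n) (Fin n) ℝ) (hU : star U * U = 1)
    (d : Fin n → ℝ) : (U * diagonal d * star U).trace = ∑ i, d i := by
  rw [Matrix.mul_assoc, Matrix.trace_mul_comm, Matrix.mul_assoc, hU, Matrix.mul_one,
    Matrix.trace_diagonal]

lemma conj_frob_sq {n : ℕ} (U : Matrix (Fin n) (Fin n) ℝ) (hU : star U * U = 1)
    (d : Fin n → ℝ) :
    ∑ i, ∑ j, ((U * diagonal d * star U) i j)^2 = ∑ i, (d i)^2 := by
  rw [frob_sq_trace]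
  have hsym : (U * diagonal d * star U)ᵀ = U * diagonal d * star U := by
    rw [Matrix.star_eq_conjTranspose, Matrix.conjTranspose_eq_transpose_of_trivial,
      Matrix.transpose_mul, Matrix.transpose_mul, Matrix.transpose_transpose,
      Matrix.diagonal_transpose, Matrix.mul_assoc]
  rw [hsym]
  have : (U * diagonal d * star U) * (U * diagonal d * star U)
      = U * (diagonal d * diagonal d) * star U := by
    rw [Matrix.star_eq_conjTranspose] at hU ⊢
    calc (U * diagonal d * Uᴴ) * (U * diagonal d * Uᴴ)
        = U * diagonal d * (Uᴴ * U) * diagonal d * Uᴴ := by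
          simp only [Matrix.mul_assoc]
      _ = U * (diagonal d * diagonal d) * Uᴴ := by
          rw [hU]; simp only [Matrix.mul_one, Matrix.mul_assoc]
  rw [this, Matrix.diagonal_mul_diagonal, conj_trace U hU]
  simp [sq]

lemma upper_psd {n : ℕ} (hn : 2 ≤ n) (X : Matrix (Fin n) (Fin n) ℝ)
    (hsym : X.IsSymm)
    (hsdd : ∀ i j : Fin n, i < j → X i j ^ 2 ≤ X i i * X j j)
    (htr : X.trace = 1) :
    ∃ Y : Matrix (Fin n) (Fin n) ℝ, Y.PosSemidef ∧ frob (X - Y) ≤ ((n:ℝ) - 2)/n := by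
  have hH : X.IsHermitian := by
    rw [Matrix.IsHermitian, Matrix.conjTranspose_eq_transpose_of_trivial]; exact hsym
  set lam := hH.eigenvalues with hlam
  set U : Matrix (Fin n) (Fin n) ℝ :=
    (Matrix.IsHermitian.eigenvectorUnitary hH : Matrix (Fin n) (Fin n) ℝ) with hu
  have hUU : star U * U = 1 :=
    (Matrix.mem_unitaryGroup_iff').mp (Matrix.IsHermitian.eigenvectorUnitary hH).2
  have hspec : X = U * diagonal lam * star U := by
    have h := hH.spectral_theorem
    have : diagonal (RCLike.ofReal ∘ lam) = diagonal lam := by congr 1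
    rw [this] at h
    exact h
  have hn2 : (2:ℝ) ≤ n := by exact_mod_cast hn
  have hn0 : (0:ℝ) < n := by positivity
  have hr0 : (0:ℝ) ≤ ((n:ℝ) - 2)/n := div_nonneg (by linarith) hn0.le
  have h1 : ∑ i, lam i = 1 := by rw [← conj_trace U hUU lam, ← hspec, htr]
  have hXij : ∀ i j, (X i j)^2 ≤ X i i * X j j := by
    intro i j
    rcases lt_trichotomy i j with h | h | h
    · exact hsdd i j h
    · subst h; rw [sq]
    · have hs : X i j = X j i := hsym.apply j i
      rw [hs, mul_comm]
      exact hsdd j i h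
  have htrs : ∑ i, X i i = 1 := htr
  have h2 : ∑ i, (lam i)^2 ≤ 1 := by
    have e1 : ∑ i, (lam i)^2 = ∑ i, ∑ j, (X i j)^2 := by
      rw [← conj_frob_sq U hUU lam, ← hspec]
    rw [e1]
    calc ∑ i, ∑ j, (X i j)^2 ≤ ∑ i, ∑ j, X i i * X j j :=
          Finset.sum_le_sum (fun i _ => Finset.sum_le_sum (fun j _ => hXij i j))
      _ = (∑ i, X i i) * (∑ j, X j j) := (Finset.sum_mul_sum _ _ _ _).symm
      _ = 1 := by rw [htrs]; ring
  refine ⟨U * diagonal (fun i => max (lam i) 0) * star U, ?_, ?_⟩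
  · have hpsd : (diagonal (fun i => max (lam i) 0)).PosSemidef :=
      Matrix.PosSemidef.diagonal (fun i => le_max_right _ _)
    have := hpsd.mul_mul_conjTranspose_same U
    rwa [← Matrix.star_eq_conjTranspose] at this
  · have hdiff : X - U * diagonal (fun i => max (lam i) 0) * star U
        = U * diagonal (fun i => min (lam i) 0) * star U := by
      have hdd : diagonal lam - diagonal (fun i => max (lam i) 0)
          = diagonal (fun i => min (lam i) 0) := by
        rw [Matrix.diagonal_sub]
        have hfun : (fun i => lam i - max (lam i) 0) = fun i => min (lam i) 0 := by
          funext i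
          rcases le_total (lam i) 0 with h | h
          · rw [max_eq_right h, min_eq_left h]; ring
          · rw [max_eq_left h, min_eq_right h]; ring
        rw [hfun]
      calc X - U * diagonal (fun i => max (lam i) 0) * star U
          = U * diagonal lam * star U - U * diagonal (fun i => max (lam i) 0) * star U := by
            rw [← hspec]
        _ = U * (diagonal lam - diagonal (fun i => max (lam i) 0)) * star U := by
            rw [Matrix.mul_sub, Matrix.sub_mul]
        _ = U * diagonal (fun i => min (lam i) 0) * star U := by rw [hdd]
    rw [hdiff]
    unfold frob
    rw [conj_frob_sq U hUU]
    have hsc := scalar_lemma n hn lam h1 h2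
    calc Real.sqrt (∑ i, (min (lam i) 0)^2) ≤ Real.sqrt ((((n:ℝ) - 2)/n)^2) :=
          Real.sqrt_le_sqrt hsc
      _ = ((n:ℝ) - 2)/n := Real.sqrt_sq hr0

end Aux

theorem trace_dist_SDDstar (n : ℕ) (hn : 2 ≤ n) :
    sSup {d : ℝ | ∃ X : Matrix (Fin n) (Fin n) ℝ,
        SDDstar X ∧ X.trace = 1 ∧ d = distPSD X} = ((n : ℝ) - 2) / n := by
  have hn2 : (2:ℝ) ≤ n := by exact_mod_cast hn
  have hn0 : (0:ℝ) < n := by positivity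
  have hnne : (n:ℝ) ≠ 0 := hn0.ne'
  set r : ℝ := ((n:ℝ) - 2)/n with hrdef
  have hr0 : (0:ℝ) ≤ r := div_nonneg (by linarith) hn0.le
  -- general facts about the inner sets
  have hBdd : ∀ X : Matrix (Fin n) (Fin n) ℝ,
      BddBelow {d : ℝ | ∃ Y : Matrix (Fin n) (Fin n) ℝ, Y.PosSemidef ∧ d = frob (X - Y)} := by
    intro X
    exact ⟨0, fun d ⟨Y, _, hd⟩ => hd ▸ Real.sqrt_nonneg _⟩
  -- upper bound: every element of the set is ≤ r
  have hub : ∀ d ∈ {d : ℝ | ∃ X : Matrix (Fin n) (Fin n) ℝ,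
      SDDstar X ∧ X.trace = 1 ∧ d = distPSD X}, d ≤ r := by
    rintro d ⟨X, ⟨hsym, _, hsdd⟩, htr, rfl⟩
    obtain ⟨Y, hY, hfr⟩ := upper_psd hn X hsym hsdd htr
    calc distPSD X ≤ frob (X - Y) := csInf_le (hBdd X) ⟨Y, hY, rfl⟩
      _ ≤ r := hfr
  -- the extremal matrix
  set X₀ : Matrix (Fin n) (Fin n) ℝ :=
    Matrix.of (fun i j => if i = j then (1:ℝ)/n else -(1/n)) with hX₀
  have hX₀app : ∀ i j, X₀ i j = if i = j then (1:ℝ)/n else -(1/n) := fun i j => rfl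
  have hSDD : SDDstar X₀ := by
    refine ⟨?_, ?_, ?_⟩
    · rw [Matrix.IsSymm]
      ext i j
      simp only [Matrix.transpose_apply, hX₀app]
      by_cases h : i = j
      · subst h; simp
      · rw [if_neg h, if_neg (fun hh => h hh.symm)]
    · intro i; rw [hX₀app, if_pos rfl]; positivity
    · intro i j hij
      have hne : i ≠ j := ne_of_lt hij
      rw [hX₀app, hX₀app, hX₀app, if_neg hne, if_pos rfl, if_pos rfl]
      rw [div_mul_div_comm, one_mul]
      ring_nf
      exact le_refl _
  have htr₀ : X₀.trace = 1 := by
    rw [Matrix.trace]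
    simp only [Matrix.diag, hX₀app, if_pos rfl, if_true]
    rw [Finset.sum_const, Finset.card_univ, Fintype.card_fin, nsmul_eq_mul]
    field_simp
  -- the good PSD approximation of X₀
  set Y₀ : Matrix (Fin n) (Fin n) ℝ :=
    Matrix.of (fun i j => (if i = j then (2:ℝ)/n else 0) - 2/(n:ℝ)^2) with hY₀
  have hY₀app : ∀ i j, Y₀ i j = (if i = j then (2:ℝ)/n else 0) - 2/(n:ℝ)^2 := fun i j => rfl
  have hY₀mulVec : ∀ (x : Fin n → ℝ) (i : Fin n),
      (Y₀ *ᵥ x) i = (2/n) * x i - (2/(n:ℝ)^2) * ∑ j, x j := by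
    intro x i
    simp only [Matrix.mulVec, dotProduct, hY₀app, sub_mul]
    rw [Finset.sum_sub_distrib]
    congr 1
    · simp [ite_mul]
    · rw [← Finset.mul_sum]
  have hY₀psd : Y₀.PosSemidef := by
    rw [Matrix.posSemidef_iff_dotProduct_mulVec]
    constructor
    · rw [Matrix.IsHermitian, Matrix.conjTranspose_eq_transpose_of_trivial]
      ext i j
      simp only [Matrix.transpose_apply, hY₀app]
      by_cases h : i = j
      · subst h; simp
      · rw [if_neg h, if_neg (fun hh => h hh.symm)]
    · intro x
      have hstar : star x = x := by
        funext i; simp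
      rw [hstar]
      have : dotProduct x (Y₀ *ᵥ x)
          = (2/n) * (∑ i, (x i)^2) - (2/(n:ℝ)^2) * (∑ i, x i)^2 := by
        rw [dotProduct]
        rw [Finset.sum_congr rfl (fun i _ => by rw [hY₀mulVec x i])]
        have : ∀ i, x i * ((2/(n:ℝ)) * x i - (2/(n:ℝ)^2) * ∑ j, x j)
            = (2/(n:ℝ)) * (x i)^2 - (2/(n:ℝ)^2) * (x i * ∑ j, x j) := by
          intro i; ring
        rw [Finset.sum_congr rfl (fun i _ => this i), Finset.sum_sub_distrib,
          ← Finset.mul_sum, ← Finset.mul_sum, ← Finset.sum_mul]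
        ring
      rw [this]
      have hCS : (∑ i, x i)^2 ≤ (n:ℝ) * ∑ i, (x i)^2 := by
        have h := sq_sum_le_card_mul_sum_sq (s := (univ : Finset (Fin n))) (f := x)
        simpa using h
      have h2 : (2/(n:ℝ)^2) * (∑ i, x i)^2 ≤ (2/(n:ℝ)^2) * ((n:ℝ) * ∑ i, (x i)^2) := by
        apply mul_le_mul_of_nonneg_left hCS; positivity
      have : (2/(n:ℝ)^2) * ((n:ℝ) * ∑ i, (x i)^2) = (2/n) * ∑ i, (x i)^2 := by
        field_simp
      linarith [h2, this ▸ h2]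
  have hdiffconst : ∀ i j, (X₀ - Y₀) i j = 2/(n:ℝ)^2 - 1/n := by
    intro i j
    simp only [Matrix.sub_apply, hX₀app, hY₀app]
    by_cases h : i = j
    · rw [if_pos h, if_pos h]; field_simp; ring
    · rw [if_neg h, if_neg h]; ring
  have hfrob₀ : frob (X₀ - Y₀) = r := by
    unfold frob
    rw [Finset.sum_congr rfl (fun i _ => Finset.sum_congr rfl
      (fun j _ => by rw [hdiffconst i j]))]
    rw [Finset.sum_const, Finset.sum_const, Finset.card_univ, Fintype.card_fin,
      nsmul_eq_mul, nsmul_eq_mul, ← mul_assoc]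
    have hrw : (n:ℝ) * (n:ℝ) * (2/(n:ℝ)^2 - 1/n)^2 = r^2 := by
      rw [hrdef]; field_simp; ring
    rw [hrw, Real.sqrt_sq hr0]
  -- lower bound for the distance set of X₀
  have hlb : ∀ d ∈ {d : ℝ | ∃ Y : Matrix (Fin n) (Fin n) ℝ, Y.PosSemidef ∧ d = frob (X₀ - Y)},
      r ≤ d := by
    rintro d ⟨Y, hY, rfl⟩
    set A := X₀ - Y with hA
    -- sum of all entries of X₀ is 2 - n
    have hsumX₀ : ∑ i, ∑ j, X₀ i j = 2 - (n:ℝ) := by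
      have hrow : ∀ i : Fin n, ∑ j, X₀ i j = (2 - (n:ℝ))/n := by
        intro i
        have : ∀ j, X₀ i j = (if i = j then (2:ℝ)/n else 0) - 1/n := by
          intro j
          rw [hX₀app]
          by_cases h : i = j
          · rw [if_pos h, if_pos h]; field_simp; ring
          · rw [if_neg h, if_neg h]; ring
        rw [Finset.sum_congr rfl (fun j _ => this j), Finset.sum_sub_distrib]
        rw [Finset.sum_ite_eq (univ : Finset (Fin n)) i (fun _ => (2:ℝ)/n)]
        simp only [Finset.mem_univ, if_pos, Finset.sum_const, Finset.card_univ,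
          Fintype.card_fin, nsmul_eq_mul]
        field_simp
      rw [Finset.sum_congr rfl (fun i _ => hrow i), Finset.sum_const, Finset.card_univ,
        Fintype.card_fin, nsmul_eq_mul]
      field_simp
    have hsumY : 0 ≤ ∑ i, ∑ j, Y i j := by
      have h := hY.dotProduct_mulVec_nonneg (fun _ => (1:ℝ))
      have hstar : star (fun _ => (1:ℝ)) = (fun (_ : Fin n) => (1:ℝ)) := by
        funext i; simp
      rw [hstar] at h
      have : dotProduct (fun (_ : Fin n) => (1:ℝ)) (Y *ᵥ (fun _ => (1:ℝ)))
          = ∑ i, ∑ j, Y i j := by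
        simp [dotProduct, Matrix.mulVec]
      rwa [this] at h
    have hS : ∑ i, ∑ j, A i j ≤ -((n:ℝ) - 2) := by
      have : ∑ i, ∑ j, A i j = (∑ i, ∑ j, X₀ i j) - ∑ i, ∑ j, Y i j := by
        rw [hA]
        rw [← Finset.sum_sub_distrib]
        apply Finset.sum_congr rfl
        intro i _
        rw [← Finset.sum_sub_distrib]
        exact Finset.sum_congr rfl (fun j _ => Matrix.sub_apply X₀ Y i j)
      rw [this, hsumX₀]
      linarith
    have hS2 : ((n:ℝ) - 2)^2 ≤ (∑ i, ∑ j, A i j)^2 := by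
      have h1 : ∑ i, ∑ j, A i j ≤ -((n:ℝ)-2) := hS
      nlinarith [hn2]
    have hCS : (∑ i, ∑ j, A i j)^2 ≤ (n:ℝ)^2 * ∑ i, ∑ j, (A i j)^2 := by
      have houter := sq_sum_le_card_mul_sum_sq (s := (univ : Finset (Fin n)))
        (f := fun i => ∑ j, A i j)
      have hinner : ∀ i : Fin n, (∑ j, A i j)^2 ≤ (n:ℝ) * ∑ j, (A i j)^2 := by
        intro i
        have h := sq_sum_le_card_mul_sum_sq (s := (univ : Finset (Fin n))) (f := fun j => A i j)
        simpa using h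
      have hcard : ((univ : Finset (Fin n)).card : ℝ) = n := by simp
      calc (∑ i, ∑ j, A i j)^2 ≤ (n:ℝ) * ∑ i, (∑ j, A i j)^2 := by simpa using houter
        _ ≤ (n:ℝ) * ∑ i, ((n:ℝ) * ∑ j, (A i j)^2) := by
            apply mul_le_mul_of_nonneg_left (Finset.sum_le_sum (fun i _ => hinner i)) hn0.le
        _ = (n:ℝ)^2 * ∑ i, ∑ j, (A i j)^2 := by
            rw [← Finset.mul_sum]; ring
    have hfin : r^2 ≤ ∑ i, ∑ j, (A i j)^2 := by
      rw [hrdef, div_pow, div_le_iff₀ (by positivity)]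
      nlinarith [hS2, hCS]
    exact Real.le_sqrt_of_sq_le hfin
  have hdist₀ : distPSD X₀ = r := by
    unfold distPSD
    apply le_antisymm
    · exact csInf_le (hBdd X₀) ⟨Y₀, hY₀psd, hfrob₀.symm⟩
    · exact le_csInf ⟨frob (X₀ - Y₀), Y₀, hY₀psd, rfl⟩ hlb
  have hmem : r ∈ {d : ℝ | ∃ X : Matrix (Fin n) (Fin n) ℝ,
      SDDstar X ∧ X.trace = 1 ∧ d = distPSD X} := ⟨X₀, hSDD, htr₀, hdist₀.symm⟩
  apply le_antisymm
  · exact csSup_le ⟨r, hmem⟩ hub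
  · exact le_csSup ⟨r, hub⟩ hmem
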